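/- arXiv:1609.02174 — 3 statements merged into one kernel-verified Lean document; each statement's English description precedes it below -/
import Mathlib

section
/- Let λ ∈ (0,1) and C ≥ M > 0. Then for every k ≥ 1, Σ_{l=1}^{k} min(M, C λ^{l−1}) ≤ (M/(1−λ)) (log(C/M) + 3). -/
/-!
Past the first `T ≈ log (C / M) / (1 - λ)` indices the terms `C λ^{l-1}` drop below `M`
(because `λ ≤ exp (-(1 - λ))`), so the sum is at most `T M` for the head plus the geometric
tail `M / (1 - λ)`.
-/

open Finset Real

theorem pow_le_exp_neg_mul_one_sub {lam : ℝ} (hlam : 0 ≤ lam) (n : ℕ) :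
    lam ^ n ≤ exp (-(n * (1 - lam))) := by
  calc lam ^ n ≤ exp (-(1 - lam)) ^ n := by
        gcongr
        simpa using one_sub_le_exp_neg (1 - lam)
    _ = exp (-(n * (1 - lam))) := by rw [← exp_nat_mul, mul_neg]

theorem mul_pow_le_of_log_div_le {lam C M : ℝ} (hlam : 0 ≤ lam) (hC : 0 < C) (hM : 0 < M)
    {n : ℕ} (hn : log (C / M) ≤ n * (1 - lam)) : C * lam ^ n ≤ M := by
  have hpow : lam ^ n ≤ M / C :=
    calc lam ^ n ≤ exp (-(n * (1 - lam))) := pow_le_exp_neg_mul_one_sub hlam n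
      _ ≤ exp (-log (C / M)) := exp_le_exp.mpr (neg_le_neg hn)
      _ = M / C := by rw [exp_neg, exp_log (div_pos hC hM), inv_div]
  calc C * lam ^ n ≤ C * (M / C) := mul_le_mul_of_nonneg_left hpow hC.le
    _ = M := mul_div_cancel₀ M hC.ne'

theorem min_mul_pow_add_le {lam C M : ℝ} {T : ℕ} (hlam : 0 ≤ lam) (hT : C * lam ^ T ≤ M)
    (j : ℕ) : min M (C * lam ^ (T + j)) ≤ M * lam ^ j :=
  calc min M (C * lam ^ (T + j)) ≤ C * lam ^ T * lam ^ j := by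
        rw [pow_add, ← mul_assoc]; exact min_le_right _ _
    _ ≤ M * lam ^ j := by gcongr

theorem sum_range_le_of_le_of_geometric_tail {a : ℕ → ℝ} {M lam : ℝ} {T : ℕ}
    (ha_nonneg : ∀ l, 0 ≤ a l) (ha_le : ∀ l, a l ≤ M)
    (ha_tail : ∀ j, a (T + j) ≤ M * lam ^ j) (hM : 0 ≤ M) (hlam0 : 0 ≤ lam) (hlam1 : lam < 1)
    (k : ℕ) : ∑ l ∈ range k, a l ≤ T * M + M / (1 - lam) := by
  have hgeom : ∑ j ∈ range k, lam ^ j ≤ 1 / (1 - lam) := by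
    simpa only [← range_eq_Ico, pow_zero] using
      geom_sum_Ico_le_of_lt_one (m := 0) (n := k) hlam0 hlam1
  calc ∑ l ∈ range k, a l ≤ ∑ l ∈ range (T + k), a l :=
        sum_le_sum_of_subset_of_nonneg (range_subset_range.mpr (Nat.le_add_left k T))
          fun l _ _ => ha_nonneg l
    _ = ∑ l ∈ range T, a l + ∑ j ∈ range k, a (T + j) := sum_range_add a T k
    _ ≤ ∑ _l ∈ range T, M + ∑ j ∈ range k, M * lam ^ j :=
        add_le_add (sum_le_sum fun l _ => ha_le l) (sum_le_sum fun j _ => ha_tail j)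
    _ = T * M + M * ∑ j ∈ range k, lam ^ j := by rw [sum_const, card_range, nsmul_eq_mul, mul_sum]
    _ ≤ T * M + M * (1 / (1 - lam)) := by gcongr
    _ = T * M + M / (1 - lam) := by rw [mul_one_div]

/-- For `λ ∈ (0,1)` and `C ≥ M > 0`, for every `k ≥ 1`,
`Σ_{l=1}^k min(M, C λ^{l−1}) ≤ (M/(1−λ))(log(C/M) + 3)`. -/
theorem stmt_9 (lam C M : ℝ)
    (hlam0 : 0 < lam) (hlam1 : lam < 1) (hM : 0 < M) (hCM : M ≤ C) :
    ∀ k, 1 ≤ k → ∑ l ∈ Finset.Icc 1 k, min M (C * lam ^ (l - 1)) ≤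
      (M / (1 - lam)) * (Real.log (C / M) + 3) := by
  intro k _
  have hgap : 0 < 1 - lam := sub_pos.mpr hlam1
  have hlog : 0 ≤ log (C / M) := log_nonneg ((one_le_div hM).mpr hCM)
  set T := ⌈log (C / M) / (1 - lam)⌉₊
  have hC : 0 < C := hM.trans_le hCM
  have hT_ge : log (C / M) ≤ T * (1 - lam) := (div_le_iff₀ hgap).mp (Nat.le_ceil _)
  have hT_lt : (T : ℝ) < log (C / M) / (1 - lam) + 1 := Nat.ceil_lt_add_one (by positivity)
  have hCT : C * lam ^ T ≤ M := mul_pow_le_of_log_div_le hlam0.le hC hM hT_ge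
  calc ∑ l ∈ Icc 1 k, min M (C * lam ^ (l - 1)) = ∑ l ∈ range k, min M (C * lam ^ l) := by
        rw [← Ico_add_one_right_eq_Icc, sum_Ico_eq_sum_range, Nat.add_sub_cancel]
        simp only [Nat.add_sub_cancel_left]
    _ ≤ T * M + M / (1 - lam) :=
        sum_range_le_of_le_of_geometric_tail (fun l => le_min hM.le (by positivity))
          (fun l => min_le_left _ _) (min_mul_pow_add_le hlam0.le hCT) hM.le hlam0.le hlam1 k
    _ ≤ (M / (1 - lam)) * (log (C / M) + 3) := by
        have hhead : T * M ≤ M / (1 - lam) * log (C / M) + M := by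
          calc (T : ℝ) * M ≤ (log (C / M) / (1 - lam) + 1) * M := by gcongr
            _ = M / (1 - lam) * log (C / M) + M := by ring
        have hM_le : M ≤ M / (1 - lam) := le_div_self hM.le hgap (by linarith)
        linarith
end

section
/- Let P and Q be the row-stochastic averaging matrices of two undirected graphs G and G' on n vertices (P_{ij} = 1/d_i if (i,j) ∈ E, else 0, where d_i is the degree of vertex i in G, and similarly for Q), where every vertex has positive degree in both graphs. If each vertex's neighborhood changes by at most R vertices between G and G' (i.e., the symmetric difference of the neighbor sets of each vertex i has cardinality ≤ R), and d_min and d_max are the minimum and maximum degrees of G with R < d_min, then ‖P − Q‖_∞ ≤ 2R/(d_min − R), where ‖P − Q‖_∞ is the maximum row-sum of |P − Q|. -/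
lemma aux_stmt10 (a b c R m : ℝ) (ha : 0 ≤ a) (hb : 0 ≤ b) (hc : 0 ≤ c)
    (hab : a + b ≤ R) (hm : m ≤ a + c) (hRm : R < m) :
    a/(a+c) + b/(b+c) + c * |1/(a+c) - 1/(b+c)| ≤ 2*R/(m-R) := by
  have hmR : 0 < m - R := by linarith
  have hx : 0 < a + c := by linarith
  have hy0 : m - R ≤ b + c := by linarith
  have hy : 0 < b + c := by linarith
  have habs : |1/(a+c) - 1/(b+c)| = |b - a| / ((a+c)*(b+c)) := by
    rw [div_sub_div _ _ (ne_of_gt hx) (ne_of_gt hy)]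
    rw [abs_div, abs_of_pos (by positivity : (0:ℝ) < (a+c)*(b+c))]
    congr 1
    congr 1
    ring
  rw [habs]
  have hxmR : m - R ≤ a + c := by linarith
  rcases le_total a b with h | h
  · rw [abs_of_nonneg (by linarith : (0:ℝ) ≤ b - a)]
    have h3 : c * ((b - a) / ((a+c)*(b+c))) ≤ (b - a)/(m-R) := by
      rw [mul_div_assoc']
      calc c * (b - a) / ((a+c)*(b+c)) ≤ (a+c) * (b - a) / ((a+c)*(m-R)) := by
            gcongr <;> nlinarith
        _ = (b - a)/(m-R) := mul_div_mul_left _ _ (ne_of_gt hx)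
    have h1 : a/(a+c) ≤ a/(m-R) := by gcongr
    have h2 : b/(b+c) ≤ b/(m-R) := by gcongr
    have hsum : a/(m-R) + b/(m-R) + (b - a)/(m-R) = 2*b/(m-R) := by ring
    have : 2*b/(m-R) ≤ 2*R/(m-R) := by gcongr; linarith
    linarith
  · rw [abs_of_nonpos (by linarith : (b:ℝ) - a ≤ 0)]
    have h3 : c * (-(b - a) / ((a+c)*(b+c))) ≤ (a - b)/(m-R) := by
      rw [mul_div_assoc']
      calc c * (-(b - a)) / ((a+c)*(b+c)) ≤ (b+c) * (a - b) / ((m-R)*(b+c)) := by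
            gcongr <;> nlinarith
        _ = (a - b)/(m-R) := by
            rw [mul_comm (m-R) (b+c)]
            exact mul_div_mul_left _ _ (ne_of_gt hy)
    have h1 : a/(a+c) ≤ a/(m-R) := by gcongr
    have h2 : b/(b+c) ≤ b/(m-R) := by gcongr
    have hsum : a/(m-R) + b/(m-R) + (a - b)/(m-R) = 2*a/(m-R) := by ring
    have : 2*a/(m-R) ≤ 2*R/(m-R) := by gcongr; linarith
    linarith

/-- If the averaging matrices `P, Q` of two graphs `G, G'` (all degrees positive) are
compared, every vertex's neighborhood changes by at most `R` vertices (symmetric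
difference), and `R < d_min` where `d_min, d_max` bound the degrees of `G`, then the
maximum absolute row sum of `P − Q` is at most `2R/(d_min − R)`. -/
theorem stmt_10 {n : ℕ} (G G' : SimpleGraph (Fin n))
    [DecidableRel G.Adj] [DecidableRel G'.Adj]
    (hdG : ∀ i, 0 < G.degree i) (hdG' : ∀ i, 0 < G'.degree i)
    (R dmin dmax : ℕ)
    (hR : ∀ i, (symmDiff (G.neighborFinset i) (G'.neighborFinset i)).card ≤ R)
    (hdmin : ∀ i, dmin ≤ G.degree i) (hdmax : ∀ i, G.degree i ≤ dmax)
    (hRd : R < dmin)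
    (P Q : Matrix (Fin n) (Fin n) ℝ)
    (hP : ∀ i j, P i j = if G.Adj i j then (1 : ℝ) / G.degree i else 0)
    (hQ : ∀ i j, Q i j = if G'.Adj i j then (1 : ℝ) / G'.degree i else 0) :
    ∀ i, ∑ j, |P i j - Q i j| ≤ 2 * (R : ℝ) / ((dmin : ℝ) - R) := by
  intro i
  set A := G.neighborFinset i with hAdef
  set B := G'.neighborFinset i with hBdef
  set da : ℝ := (G.degree i : ℝ) with hda
  set db : ℝ := (G'.degree i : ℝ) with hdb
  have hda0 : 0 < da := by rw [hda]; exact_mod_cast hdG i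
  have hdb0 : 0 < db := by rw [hdb]; exact_mod_cast hdG' i
  have key : ∀ j, |P i j - Q i j| =
      (if j ∈ A \ B then 1/da else 0) + ((if j ∈ B \ A then 1/db else 0)
        + (if j ∈ A ∩ B then |1/da - 1/db| else 0)) := by
    intro j
    rw [hP, hQ]
    have h1 : G.Adj i j ↔ j ∈ A := (SimpleGraph.mem_neighborFinset G i j).symm
    have h2 : G'.Adj i j ↔ j ∈ B := (SimpleGraph.mem_neighborFinset G' i j).symm
    by_cases e1 : j ∈ A <;> by_cases e2 : j ∈ B <;>
      simp [h1, h2, e1, e2, Finset.mem_sdiff, Finset.mem_inter, ← hda, ← hdb,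
        abs_of_nonneg (le_of_lt (by positivity : (0:ℝ) < 1/da)),
        abs_of_nonneg (le_of_lt (by positivity : (0:ℝ) < 1/db)), le_of_lt hda0, le_of_lt hdb0]
  rw [Finset.sum_congr rfl (fun j _ => key j), Finset.sum_add_distrib,
    Finset.sum_add_distrib]
  simp only [Finset.sum_ite_mem, Finset.univ_inter, Finset.sum_const, nsmul_eq_mul]
  -- cardinal identities
  have hcard1 : (A \ B).card + (A ∩ B).card = G.degree i := by
    rw [Finset.card_sdiff_add_card_inter, hAdef, SimpleGraph.card_neighborFinset_eq_degree]
  have hcard2 : (B \ A).card + (A ∩ B).card = G'.degree i := by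
    rw [Finset.inter_comm, Finset.card_sdiff_add_card_inter, hBdef,
      SimpleGraph.card_neighborFinset_eq_degree]
  have hcard3 : (A \ B).card + (B \ A).card ≤ R := by
    have := hR i
    rwa [symmDiff_def, Finset.sup_eq_union,
      Finset.card_union_of_disjoint disjoint_sdiff_sdiff] at this
  have a_def : True := trivial
  let a : ℝ := ((A \ B).card : ℝ)
  let b : ℝ := ((B \ A).card : ℝ)
  let c : ℝ := ((A ∩ B).card : ℝ)
  have hab : a + b ≤ (R:ℝ) := by show ((A \ B).card:ℝ) + ((B \ A).card:ℝ) ≤ (R:ℝ); exact_mod_cast hcard3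
  have hdaeq : da = a + c := by rw [hda, ← hcard1]; push_cast; ring
  have hdbeq : db = b + c := by rw [hdb, ← hcard2]; push_cast; ring
  have hmain := aux_stmt10 a b c R dmin (by positivity) (by positivity) (by positivity)
    hab
    (by rw [← hdaeq, hda]; exact_mod_cast hdmin i)
    (by exact_mod_cast hRd)
  rw [← hdaeq, ← hdbeq] at hmain
  calc a * (1/da) + (b * (1/db) + c * |1/da - 1/db|)
      = a/da + b/db + c * |1/da - 1/db| := by ring
    _ ≤ 2*(R:ℝ)/((dmin:ℝ) - R) := hmain
end

section
/- Suppose nonnegative sequences A_k (followers) and B_k (leaders) satisfy, for all k ≥ 1: A_{k+1} ≤ (1 − α_k) A_k + α_k B_k and B_{k+1} ≤ (1 − ϑ)[(1 − α_k) A_k + α_k B_k], where ϑ ∈ (0,1], and α_k ∈ [α_min, 1] with α_min > 0, and initially A_1 ≤ A, B_1 ≤ (1 − ϑ) A. Then for all k ≥ 1, A_k ≤ γ^{k−1} A and B_k ≤ (1 − ϑ) γ^{k−1} A, where γ = 1 − α_min ϑ. -/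
/-- Leader–follower contraction: if `A_{k+1} ≤ (1−α_k)A_k + α_k B_k` and
`B_{k+1} ≤ (1−ϑ)[(1−α_k)A_k + α_k B_k]` with `ϑ ∈ (0,1]`, `α_k ∈ [α_min,1]`,
`α_min > 0`, and `A_1 ≤ A`, `B_1 ≤ (1−ϑ)A`, then `A_k ≤ γ^{k−1}A` and
`B_k ≤ (1−ϑ)γ^{k−1}A` for all `k ≥ 1`, where `γ = 1 − α_min ϑ`. -/
theorem stmt_11 (A B α : ℕ → ℝ) (ϑ αmin Aconst : ℝ)
    (hϑ0 : 0 < ϑ) (hϑ1 : ϑ ≤ 1) (hαmin : 0 < αmin)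
    (hα : ∀ k, 1 ≤ k → αmin ≤ α k ∧ α k ≤ 1)
    (hApos : ∀ k, 0 ≤ A k) (hBpos : ∀ k, 0 ≤ B k)
    (hArec : ∀ k, 1 ≤ k → A (k + 1) ≤ (1 - α k) * A k + α k * B k)
    (hBrec : ∀ k, 1 ≤ k → B (k + 1) ≤ (1 - ϑ) * ((1 - α k) * A k + α k * B k))
    (hA1 : A 1 ≤ Aconst) (hB1 : B 1 ≤ (1 - ϑ) * Aconst) :
    ∀ k, 1 ≤ k → A k ≤ (1 - αmin * ϑ) ^ (k - 1) * Aconst ∧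
      B k ≤ (1 - ϑ) * (1 - αmin * ϑ) ^ (k - 1) * Aconst := by
  have hAc : 0 ≤ Aconst := le_trans (hApos 1) hA1
  have hγ0 : 0 ≤ 1 - αmin * ϑ := by
    have h1 : αmin ≤ α 1 := (hα 1 le_rfl).1
    have h2 : α 1 ≤ 1 := (hα 1 le_rfl).2
    nlinarith
  intro k hk
  induction k with
  | zero => omega
  | succ n ih =>
    rcases Nat.eq_or_lt_of_le hk with h | h
    · simp only [← h]
      simpa using ⟨hA1, hB1⟩
    · have hn : 1 ≤ n := by omega
      obtain ⟨ihA, ihB⟩ := ih hn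
      have hα1 := (hα n hn).1
      have hα2 := (hα n hn).2
      have hγpow : 0 ≤ (1 - αmin * ϑ) ^ (n - 1) := pow_nonneg hγ0 _
      -- key contraction step
      have hkey : (1 - α n) * A n + α n * B n ≤
          (1 - αmin * ϑ) ^ n * Aconst := by
        have h1 : (1 - α n) * A n ≤ (1 - α n) * ((1 - αmin * ϑ) ^ (n - 1) * Aconst) :=
          mul_le_mul_of_nonneg_left ihA (by linarith)
        have h2 : α n * B n ≤ α n * ((1 - ϑ) * (1 - αmin * ϑ) ^ (n - 1) * Aconst) :=
          mul_le_mul_of_nonneg_left ihB (by linarith)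
        have hpow : (1 - αmin * ϑ) ^ n =
            (1 - αmin * ϑ) * (1 - αmin * ϑ) ^ (n - 1) := by
          rw [← pow_succ']
          congr 1
          omega
        rw [hpow]
        have hαϑ : αmin * ϑ ≤ α n * ϑ :=
          mul_le_mul_of_nonneg_right hα1 (le_of_lt hϑ0)
        nlinarith [mul_nonneg hγpow hAc]
      have hns : n + 1 - 1 = n := by omega
      rw [hns]
      constructor
      · exact le_trans (hArec n hn) hkey
      · refine le_trans (hBrec n hn) ?_
        rw [mul_assoc]
        exact mul_le_mul_of_nonneg_left hkey (by linarith)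
end
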